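/- arXiv:math/9606210 — 3 statements merged into one kernel-verified Lean document; each statement's English description precedes it below -/
import Mathlib

section
/- Let X be a Dedekind σ-complete Banach lattice in which every set of pairwise disjoint nonzero positive elements is countable. Then X has a Levi norm if and only if X has a sequentially Levi norm. -/
/-- A Banach lattice has a *Levi norm* if every norm-bounded upward directed
(nonempty) set of positive elements has a supremum. -/
def HasLeviNorm (E : Type*) [NormedAddCommGroup E] [Lattice E] : Prop :=
  ∀ A : Set E, A.Nonempty → (∀ x ∈ A, 0 ≤ x) → DirectedOn (· ≤ ·) A →
    (∃ M : ℝ, ∀ x ∈ A, ‖x‖ ≤ M) → ∃ s : E, IsLUB A s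

/-- A Banach lattice has a *sequentially Levi norm* if every norm-bounded
increasing sequence of positive elements has a supremum. -/
def HasSeqLeviNorm (E : Type*) [NormedAddCommGroup E] [Lattice E] : Prop :=
  ∀ x : ℕ → E, (∀ n, 0 ≤ x n) → Monotone x → (∃ M : ℝ, ∀ n, ‖x n‖ ≤ M) →
    ∃ s : E, IsLUB (Set.range x) s
/-- A lattice is *Dedekind σ-complete* if every increasing sequence bounded
above has a least upper bound. -/
def DedekindSigmaComplete (E : Type*) [Lattice E] : Prop :=
  ∀ x : ℕ → E, Monotone x → BddAbove (Set.range x) → ∃ s : E, IsLUB (Set.range x) s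

/-!
Given a norm-bounded directed set `A ≥ 0`, let `S` be the set of suprema of increasing sequences
in `A`. Directedness and the sequential Levi property make every countable subset of `S` bounded
above in `S`, so by Zorn's lemma `S` has a maximal element, which is then `sup A`, as soon as
every chain `C ⊆ S` has a countable subset with the same upper bounds.

For the latter, countability of disjoint families yields a weak unit `e`, so every `c ≥ 0` is the
supremum of its truncations `c ⊓ n • e`. For `0 ≤ t ≤ v` the band projections
`P_k t = P_{(N • t - k • v)⁺} v` are components of `v` with
`∑_{k<N} P_{k+1} t ≤ N • t ≤ ∑_{k<N} P_k t` (Freudenthal), so `t ≤ s` as soon as `P_k t ≤ P_k s`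
for all `N, k`. As `t` runs through a chain, each `P_k t` runs through a chain of components, and
for such a chain a maximal disjoint family of nonzero elements below its members is countable and
picks out a countable subset with the same upper bounds.
-/

open Set

lemma exists_maximal_pairwise_subset {β : Type*} {r : β → β → Prop} (hr : ∀ a b, r a b → r b a)
    (P : Set β) : ∃ D ⊆ P, D.Pairwise r ∧ ∀ z ∈ P, (∀ d ∈ D, r z d) → z ∈ D := by
  obtain ⟨D, hD⟩ := zorn_subset {D | D ⊆ P ∧ D.Pairwise r} fun c hc hchain =>
    ⟨⋃₀ c, ⟨sUnion_subset fun s hs => (hc hs).1, hchain.pairwise_sUnion.2 fun s hs => (hc hs).2⟩,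
      fun s hs => subset_sUnion_of_mem hs⟩
  refine ⟨D, hD.prop.1, hD.prop.2, fun z hz hzD => ?_⟩
  have hins : insert z D ⊆ P ∧ (insert z D).Pairwise r :=
    ⟨insert_subset hz hD.prop.1, hD.prop.2.insert fun d hd _ => ⟨hzD d hd, hr _ _ (hzD d hd)⟩⟩
  exact hD.eq_of_subset hins (subset_insert z D) ▸ mem_insert z D

def HasCountableDisjointFamilies (α : Type*) [Lattice α] [Zero α] : Prop :=
  ∀ A : Set α, (∀ x ∈ A, 0 ≤ x) → (∀ x ∈ A, x ≠ 0) →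
    A.Pairwise (fun a b => a ⊓ b = 0) → A.Countable

lemma HasCountableDisjointFamilies.exists_countable_maximal_disjoint {α : Type*} [Lattice α]
    [Zero α] (hcount : HasCountableDisjointFamilies α) {P : Set α} (hP : ∀ z ∈ P, 0 ≤ z ∧ z ≠ 0) :
    ∃ D ⊆ P, D.Countable ∧ ∀ z ∈ P, ∃ d ∈ D, z ⊓ d ≠ 0 := by
  obtain ⟨D, hDP, hD, hmax⟩ :=
    exists_maximal_pairwise_subset (r := fun a b : α => a ⊓ b = 0) (fun a b h => by rwa [inf_comm]) P
  refine ⟨D, hDP, hcount D (fun z hz => (hP z (hDP hz)).1) (fun z hz => (hP z (hDP hz)).2) hD,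
    fun z hz => ?_⟩
  by_contra! h
  exact (hP z hz).2 (by simpa using h z (hmax z hz h))

section LatticeOrderedGroup

variable {α : Type*} [AddCommGroup α] [Lattice α] [IsOrderedAddMonoid α]

lemma add_eq_sup_of_inf_eq_zero {a b : α} (h : a ⊓ b = 0) : a + b = a ⊔ b := by
  rw [← inf_add_sup a b, h, zero_add]

lemma inf_add_le_add_inf {a b c : α} (ha : 0 ≤ a) (hb : 0 ≤ b) (hc : 0 ≤ c) :
    c ⊓ (a + b) ≤ c ⊓ a + c ⊓ b := by
  rw [← sub_le_iff_le_add', sub_inf]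
  refine sup_le ((sub_nonpos.2 inf_le_left).trans (le_inf hc hb)) ?_
  rw [inf_sub, add_sub_cancel_left]
  exact inf_le_inf_right b (sub_le_self c ha)

lemma inf_nsmul_eq_zero {a b : α} (ha : 0 ≤ a) (hb : 0 ≤ b) (h : a ⊓ b = 0) (n : ℕ) :
    a ⊓ n • b = 0 := by
  induction n with
  | zero => rw [zero_nsmul, inf_eq_right.2 ha]
  | succ n ih =>
    refine le_antisymm ?_ (le_inf ha (nsmul_nonneg hb _))
    calc a ⊓ (n + 1) • b = a ⊓ (n • b + b) := by rw [succ_nsmul]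
      _ ≤ a ⊓ n • b + a ⊓ b := inf_add_le_add_inf (nsmul_nonneg hb n) hb ha
      _ = 0 := by rw [ih, h, add_zero]

lemma nsmul_inf_nsmul_eq_zero {a b : α} (ha : 0 ≤ a) (hb : 0 ≤ b) (h : a ⊓ b = 0) (m n : ℕ) :
    m • a ⊓ n • b = 0 := by
  have h' : n • b ⊓ a = 0 := by rw [inf_comm]; exact inf_nsmul_eq_zero ha hb h n
  rw [inf_comm]
  exact inf_nsmul_eq_zero (nsmul_nonneg hb n) ha h' m

lemma posPart_sub_eq_of_inf_eq_zero {a b : α} (h : a ⊓ b = 0) : (a - b)⁺ = a := by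
  rw [posPart_def, ← sub_self b, ← sup_sub, ← add_eq_sup_of_inf_eq_zero h, add_sub_cancel_right]

lemma nsmul_posPart (n : ℕ) (a : α) : (n • a)⁺ = n • a⁺ := by
  conv_lhs => rw [← posPart_sub_negPart a, smul_sub]
  exact posPart_sub_eq_of_inf_eq_zero <| nsmul_inf_nsmul_eq_zero (posPart_nonneg a)
    (negPart_nonneg a) (posPart_inf_negPart_eq_zero a) n n

lemma posPart_eq_posPart_sub_add_posPart_inf (x : α) {v : α} (hv : 0 ≤ v) :
    x⁺ = (x - v)⁺ + x⁺ ⊓ v := by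
  have hsup : x⁺ ⊔ v = x ⊔ v := by rw [posPart_def, sup_assoc, sup_eq_right.2 hv]
  have h := inf_add_sup x⁺ v
  rw [hsup] at h
  rw [posPart_def (x - v), ← sub_self v, ← sup_sub, sub_add_eq_add_sub, add_comm (x ⊔ v), h,
    add_sub_cancel_right]

lemma posPart_eq_posPart_sub_nsmul_add_sum (x : α) {v : α} (hv : 0 ≤ v) (N : ℕ) :
    x⁺ = (x - N • v)⁺ + ∑ k ∈ Finset.range N, (x - k • v)⁺ ⊓ v := by
  induction N with
  | zero => simp
  | succ N ih =>
    rw [ih, posPart_eq_posPart_sub_add_posPart_inf (x - N • v) hv, Finset.sum_range_succ,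
      succ_nsmul, sub_sub]
    abel

def IsComponent (v p : α) : Prop := 0 ≤ p ∧ p ≤ v ∧ p ⊓ (v - p) = 0

def IsWeakUnit (e : α) : Prop := 0 ≤ e ∧ ∀ x, 0 ≤ x → x ⊓ e = 0 → x = 0

/-- For `0 ≤ x` this is the projection `⨆ j, v ⊓ j • x` of `v` onto the band generated by `x`;
it is a junk value when that supremum does not exist. -/
noncomputable def bandProj (x v : α) : α :=
  Classical.epsilon (IsLUB (range fun j : ℕ => v ⊓ j • x))

lemma IsLUB.nonpos_of_forall_add_le {s : Set α} {p q : α} (hp : IsLUB s p)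
    (h : ∀ y ∈ s, y + q ≤ p) : q ≤ 0 := by
  have : p ≤ p - q := hp.2 fun y hy => le_sub_iff_add_le.2 (h y hy)
  rwa [le_sub_self_iff] at this

section BandProj

variable (hsc : DedekindSigmaComplete α)
include hsc

lemma isLUB_bandProj {x : α} (hx : 0 ≤ x) (v : α) :
    IsLUB (range fun j : ℕ => v ⊓ j • x) (bandProj x v) :=
  Classical.epsilon_spec <| hsc _ (fun _ _ hij => inf_le_inf_left v (nsmul_le_nsmul_left hx hij))
    ⟨v, forall_mem_range.2 fun _ => inf_le_left⟩

lemma bandProj_le {x : α} (hx : 0 ≤ x) (v : α) : bandProj x v ≤ v :=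
  (isLUB_bandProj hsc hx v).2 (forall_mem_range.2 fun _ => inf_le_left)

lemma inf_le_bandProj {x : α} (hx : 0 ≤ x) (v : α) : v ⊓ x ≤ bandProj x v := by
  simpa using (isLUB_bandProj hsc hx v).1 (mem_range_self 1)

lemma bandProj_nonneg {x v : α} (hx : 0 ≤ x) (hv : 0 ≤ v) : 0 ≤ bandProj x v :=
  (le_inf hv hx).trans (inf_le_bandProj hsc hx v)

lemma bandProj_mono {x y : α} (hx : 0 ≤ x) (hxy : x ≤ y) (v : α) : bandProj x v ≤ bandProj y v :=
  (isLUB_bandProj hsc hx v).2 <| forall_mem_range.2 fun j =>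
    (inf_le_inf_left v (nsmul_le_nsmul_right hxy j)).trans
      ((isLUB_bandProj hsc (hx.trans hxy) v).1 (mem_range_self j))

lemma sub_bandProj_inf_eq_zero {x : α} (hx : 0 ≤ x) (v : α) : (v - bandProj x v) ⊓ x = 0 := by
  have hlub := isLUB_bandProj hsc hx v
  refine le_antisymm (hlub.nonpos_of_forall_add_le (forall_mem_range.2 fun j => ?_))
    (le_inf (sub_nonneg.2 (bandProj_le hsc hx v)) hx)
  have hv : v ⊓ j • x + (v - bandProj x v) ⊓ x ≤ v := by
    rw [← le_sub_iff_add_le']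
    exact inf_le_left.trans (sub_le_sub_left (hlub.1 (mem_range_self j)) v)
  have hx' : v ⊓ j • x + (v - bandProj x v) ⊓ x ≤ (j + 1) • x := by
    rw [succ_nsmul]
    exact add_le_add inf_le_right inf_le_right
  exact (le_inf hv hx').trans (hlub.1 (mem_range_self (j + 1)))

lemma inf_bandProj_eq_zero {x v z : α} (hx : 0 ≤ x) (hv : 0 ≤ v) (hz : 0 ≤ z)
    (hzx : z ⊓ x = 0) : z ⊓ bandProj x v = 0 := by
  have hlub := isLUB_bandProj hsc hx v
  refine le_antisymm (hlub.nonpos_of_forall_add_le (forall_mem_range.2 fun j => ?_))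
    (le_inf hz (bandProj_nonneg hsc hx hv))
  have hdisj : v ⊓ j • x ⊓ (z ⊓ bandProj x v) = 0 := by
    refine le_antisymm ?_ (le_inf (le_inf hv (nsmul_nonneg hx j)) (le_inf hz
      (bandProj_nonneg hsc hx hv)))
    rw [← inf_nsmul_eq_zero hz hx hzx j, inf_comm]
    exact inf_le_inf inf_le_left inf_le_right
  rw [add_eq_sup_of_inf_eq_zero hdisj]
  exact sup_le (hlub.1 (mem_range_self j)) inf_le_right

lemma isComponent_bandProj {x v : α} (hx : 0 ≤ x) (hv : 0 ≤ v) :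
    IsComponent v (bandProj x v) := by
  refine ⟨bandProj_nonneg hsc hx hv, bandProj_le hsc hx v, ?_⟩
  rw [inf_comm]
  exact inf_bandProj_eq_zero hsc hx hv (sub_nonneg.2 (bandProj_le hsc hx v))
    (sub_bandProj_inf_eq_zero hsc hx v)

lemma bandProj_of_isWeakUnit {e : α} (he : IsWeakUnit e) (y : α) : bandProj e y = y :=
  (sub_eq_zero.1 (he.2 _ (sub_nonneg.2 (bandProj_le hsc he.1 y))
    (sub_bandProj_inf_eq_zero hsc he.1 y))).symm

lemma bandProj_posPart_le {v : α} (hv : 0 ≤ v) (y : α) : bandProj y⁺ v ≤ (y + v)⁺ := by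
  set p := bandProj y⁺ v
  have hp : 0 ≤ p := bandProj_nonneg hsc (posPart_nonneg y) hv
  have hdisj : y⁻ ⊓ p = 0 := inf_bandProj_eq_zero hsc (posPart_nonneg y) hv (negPart_nonneg y)
    (by rw [inf_comm]; exact posPart_inf_negPart_eq_zero y)
  -- `p - (y + v)⁺` is below `-y`, hence its positive part lies below `p ⊓ y⁻ = 0`
  have hneg : (p - (y + v)⁺)⁺ ≤ y⁻ := by
    rw [← posPart_eq_self.2 (negPart_nonneg y)]
    refine posPart_mono ((sub_le_sub_left (le_posPart _) p).trans ?_)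
    calc p - (y + v) ≤ -y := by
          rw [sub_le_iff_le_add, neg_add_cancel_left]; exact bandProj_le hsc (posPart_nonneg y) v
      _ ≤ y⁻ := neg_le_negPart y
  have hle : (p - (y + v)⁺)⁺ ≤ p := sup_le (sub_le_self _ (posPart_nonneg _)) hp
  rw [← sub_nonpos, ← posPart_eq_zero]
  exact le_antisymm ((le_inf hneg hle).trans hdisj.le) (posPart_nonneg _)

lemma posPart_le_sum_bandProj {x v : α} (hv : 0 ≤ v) {N : ℕ} (hxN : x ≤ N • v) :
    x⁺ ≤ ∑ k ∈ Finset.range N, bandProj (x - k • v)⁺ v := by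
  rw [posPart_eq_posPart_sub_nsmul_add_sum x hv N, posPart_eq_zero.2 (sub_nonpos.2 hxN), zero_add]
  exact Finset.sum_le_sum fun k _ => by
    rw [inf_comm]; exact inf_le_bandProj hsc (posPart_nonneg _) v

lemma sum_bandProj_succ_le_posPart {v : α} (hv : 0 ≤ v) (x : α) (N : ℕ) :
    ∑ k ∈ Finset.range N, bandProj (x - (k + 1) • v)⁺ v ≤ x⁺ := by
  calc ∑ k ∈ Finset.range N, bandProj (x - (k + 1) • v)⁺ v
      ≤ ∑ k ∈ Finset.range N, (x - k • v)⁺ ⊓ v := Finset.sum_le_sum fun k _ => by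
        refine le_inf ?_ (bandProj_le hsc (posPart_nonneg _) v)
        convert bandProj_posPart_le hsc hv (x - (k + 1) • v) using 2
        rw [succ_nsmul]; abel
    _ ≤ (x - N • v)⁺ + ∑ k ∈ Finset.range N, (x - k • v)⁺ ⊓ v :=
        le_add_of_nonneg_left (posPart_nonneg _)
    _ = x⁺ := (posPart_eq_posPart_sub_nsmul_add_sum x hv N).symm

end BandProj

lemma exists_countable_forall_le_of_isComponent (hcount : HasCountableDisjointFamilies α)
    {ι : Type*} [Preorder ι] {v : α} {φ : ι → α} (hφ : Monotone φ) {C : Set ι}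
    (hC : IsChain (· ≤ ·) C) (hφC : ∀ c ∈ C, IsComponent v (φ c)) :
    ∃ C₀ ⊆ C, C₀.Countable ∧ ∀ m, (∀ c ∈ C₀, φ c ≤ m) → ∀ c ∈ C, φ c ≤ m := by
  rcases C.eq_empty_or_nonempty with rfl | ⟨c₁, hc₁⟩
  · exact ⟨∅, empty_subset _, countable_empty, by simp⟩
  set P : Set α := {z | 0 ≤ z ∧ z ≠ 0 ∧ ∃ b ∈ C, z ≤ φ b}
  obtain ⟨D, hDP, hDc, hD⟩ :=
    hcount.exists_countable_maximal_disjoint (P := P) fun z hz => ⟨hz.1, hz.2.1⟩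
  choose b hbC hb using fun d : D => (hDP d.2).2.2
  have : Countable D := hDc.to_subtype
  refine ⟨insert c₁ (range b), insert_subset hc₁ (range_subset_iff.2 hbC),
    (countable_range b).insert c₁, fun m hm c hc => ?_⟩
  by_contra hcm
  have hm0 : 0 ≤ m := (hφC c₁ hc₁).1.trans (hm c₁ (mem_insert _ _))
  have hbc : ∀ d, φ (b d) ≤ φ c := fun d =>
    ((hC.total (hbC d) hc).imp hφ.imp hφ.imp).resolve_right fun h =>
      hcm (h.trans (hm _ (mem_insert_of_mem _ (mem_range_self d))))
  -- `(φ c - m)⁺` is a new member of `P`, disjoint from every `d ∈ D`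
  have hz : (φ c - m)⁺ ∈ P :=
    ⟨posPart_nonneg _, fun h => hcm (sub_nonpos.1 (posPart_eq_zero.1 h)), c, hc,
      sup_le (sub_le_self _ hm0) (hφC c hc).1⟩
  obtain ⟨d, hd, hzd⟩ := hD _ hz
  set w := φ (b ⟨d, hd⟩)
  have hzw : (φ c - m)⁺ ≤ v - w :=
    calc (φ c - m)⁺ ≤ (φ c - w)⁺ :=
          posPart_mono (sub_le_sub_left (hm _ (mem_insert_of_mem _ (mem_range_self _))) _)
      _ = φ c - w := posPart_eq_self.2 (sub_nonneg.2 (hbc _))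
      _ ≤ v - w := sub_le_sub_right (hφC c hc).2.1 _
  have hwv : (v - w) ⊓ w = 0 := by rw [inf_comm]; exact (hφC _ (hbC _)).2.2
  exact hzd (le_antisymm ((inf_le_inf hzw (hb ⟨d, hd⟩)).trans hwv.le) (le_inf hz.1 (hDP hd).1))

end LatticeOrderedGroup

section NormedLattice

variable {X : Type*} [NormedAddCommGroup X] [Lattice X] [IsOrderedAddMonoid X] [HasSolidNorm X]
  [NormedSpace ℝ X]

lemma nonpos_of_forall_nsmul_le {x v : X} (h : ∀ N : ℕ, N • x ≤ v) : x ≤ 0 := by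
  rw [← posPart_eq_zero, ← norm_eq_zero]
  by_contra hne
  have hpos : 0 < ‖x⁺‖ := (norm_nonneg _).lt_of_ne' hne
  obtain ⟨N, hN⟩ := exists_nat_gt (‖v⁺‖ / ‖x⁺‖)
  have hle : ‖N • x⁺‖ ≤ ‖v⁺‖ := by
    refine norm_le_norm_of_abs_le_abs ?_
    rw [abs_of_nonneg (nsmul_nonneg (posPart_nonneg x) N), abs_of_nonneg (posPart_nonneg v),
      ← nsmul_posPart]
    exact posPart_mono (h N)
  rw [RCLike.norm_nsmul ℝ, nsmul_eq_mul, ← le_div_iff₀ hpos] at hle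
  exact hle.not_gt hN

lemma le_of_forall_bandProj_le (hsc : DedekindSigmaComplete X) {v t s : X} (ht : 0 ≤ t)
    (htv : t ≤ v) (hs : 0 ≤ s)
    (h : ∀ N k : ℕ, bandProj (N • t - k • v)⁺ v ≤ bandProj (N • s - k • v)⁺ v) : t ≤ s := by
  have hv : 0 ≤ v := ht.trans htv
  refine sub_nonpos.1 (nonpos_of_forall_nsmul_le (v := v) fun N => ?_)
  rw [smul_sub, sub_le_iff_le_add']
  calc N • t = (N • t)⁺ := (posPart_eq_self.2 (nsmul_nonneg ht N)).symm
    _ ≤ ∑ k ∈ Finset.range N, bandProj (N • t - k • v)⁺ v :=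
        posPart_le_sum_bandProj hsc hv (nsmul_le_nsmul_right htv N)
    _ ≤ ∑ k ∈ Finset.range N, bandProj (N • s - k • v)⁺ v := Finset.sum_le_sum fun k _ => h N k
    _ ≤ ∑ k ∈ Finset.range (N + 1), bandProj (N • s - k • v)⁺ v := by
        rw [Finset.sum_range_succ]
        exact le_add_of_nonneg_right (bandProj_nonneg hsc (posPart_nonneg _) hv)
    _ = ∑ k ∈ Finset.range N, bandProj (N • s - (k + 1) • v)⁺ v + bandProj (N • s - 0 • v)⁺ v :=
        Finset.sum_range_succ' _ _
    _ ≤ (N • s)⁺ + v := add_le_add (sum_bandProj_succ_le_posPart hsc hv _ N)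
        (bandProj_le hsc (posPart_nonneg _) v)
    _ = N • s + v := by rw [posPart_eq_self.2 (nsmul_nonneg hs N)]

variable [CompleteSpace X]

lemma exists_nonneg_forall_inf_eq_zero {f : ℕ → X} (hf : ∀ n, 0 ≤ f n) :
    ∃ e, 0 ≤ e ∧ ∀ x, 0 ≤ x → x ⊓ e = 0 → ∀ n, x ⊓ f n = 0 := by
  -- `u n` is `f n / m n` with `m n ≥ 2 ^ n ‖f n‖` a positive integer, so `∑ u n` converges
  set m : ℕ → ℕ := fun n => ⌈2 ^ n * ‖f n‖⌉₊ + 1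
  set u : ℕ → X := fun n => ((m n : ℝ)⁻¹ • f n)⁺
  have hm : ∀ n, (0 : ℝ) < m n := fun n => by positivity
  have hmu : ∀ n, m n • u n = f n := fun n => by
    rw [← nsmul_posPart, ← Nat.cast_smul_eq_nsmul ℝ, smul_smul, mul_inv_cancel₀ (hm n).ne',
      one_smul, posPart_eq_self.2 (hf n)]
  have hu : ∀ n, ‖u n‖ ≤ (1 / 2) ^ n := fun n => by
    calc ‖u n‖ ≤ ‖(m n : ℝ)⁻¹ • f n‖ := norm_le_norm_of_abs_le_abs <| by
          rw [abs_of_nonneg (posPart_nonneg _), ← posPart_add_negPart]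
          exact le_add_of_nonneg_right (negPart_nonneg _)
      _ ≤ (1 / 2) ^ n := by
          rw [norm_smul, norm_inv, Real.norm_natCast, inv_mul_le_iff₀ (hm n), one_div, inv_pow,
            ← div_eq_mul_inv, le_div_iff₀ (by positivity), mul_comm]
          exact (Nat.le_ceil _).trans (by simp [m])
  have hsum : Summable u := Summable.of_norm_bounded summable_geometric_two hu
  refine ⟨∑' n, u n, tsum_nonneg fun n => posPart_nonneg _, fun x hx hxe n => ?_⟩
  have hxu : x ⊓ u n = 0 := le_antisymm
    (hxe ▸ inf_le_inf_left x (hsum.le_tsum n fun j _ => posPart_nonneg _))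
    (le_inf hx (posPart_nonneg _))
  rw [← hmu n]
  exact inf_nsmul_eq_zero hx (posPart_nonneg _) hxu (m n)

lemma HasCountableDisjointFamilies.exists_isWeakUnit (hcount : HasCountableDisjointFamilies X) :
    ∃ e : X, IsWeakUnit e := by
  obtain ⟨D, hDP, hDc, hD⟩ := hcount.exists_countable_maximal_disjoint (P := {z | 0 ≤ z ∧ z ≠ 0})
    fun z hz => hz
  obtain ⟨f, hf⟩ := (hDc.insert 0).exists_eq_range (insert_nonempty 0 D)
  have hf0 : ∀ n, 0 ≤ f n := fun n => by
    rcases (hf ▸ mem_range_self n : f n ∈ insert 0 D) with h | h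
    · exact h.ge
    · exact (hDP h).1
  obtain ⟨e, he, hfe⟩ := exists_nonneg_forall_inf_eq_zero hf0
  refine ⟨e, he, fun x hx hxe => ?_⟩
  by_contra hx0
  obtain ⟨d, hd, hxd⟩ := hD x ⟨hx, hx0⟩
  obtain ⟨n, rfl⟩ : d ∈ range f := hf ▸ mem_insert_of_mem 0 hd
  exact hxd (hfe x hx hxe n)

lemma IsChain.exists_countable_upperBounds_eq (hsc : DedekindSigmaComplete X)
    (hcount : HasCountableDisjointFamilies X) {C : Set X} (hC : IsChain (· ≤ ·) C)
    (hC0 : ∀ c ∈ C, 0 ≤ c) : ∃ C₀ ⊆ C, C₀.Countable ∧ upperBounds C₀ = upperBounds C := by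
  rcases C.eq_empty_or_nonempty with rfl | ⟨c₀, hc₀⟩
  · exact ⟨∅, subset_rfl, countable_empty, rfl⟩
  obtain ⟨e, he⟩ := hcount.exists_isWeakUnit
  -- the components of `n • e` that control the truncation `c ⊓ n • e` up to `(n • e) / N`
  let φ : ℕ × ℕ × ℕ → X → X := fun p c =>
    bandProj (p.2.1 • (c ⊓ p.1 • e) - p.2.2 • p.1 • e)⁺ (p.1 • e)
  have hφ : ∀ p, Monotone (φ p) := fun p c c' hcc' =>
    bandProj_mono hsc (posPart_nonneg _) (posPart_mono (sub_le_sub_right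
      (nsmul_le_nsmul_right (inf_le_inf_right _ hcc') _) _)) _
  choose T hTC hTc hT using fun p => exists_countable_forall_le_of_isComponent hcount (hφ p) hC
    fun c _ => isComponent_bandProj hsc (posPart_nonneg _) (nsmul_nonneg he.1 p.1)
  have hC₀C : insert c₀ (⋃ p, T p) ⊆ C := insert_subset hc₀ (iUnion_subset hTC)
  refine ⟨_, hC₀C, (countable_iUnion hTc).insert c₀,
    subset_antisymm (fun s hs c hc => ?_) (upperBounds_mono_set hC₀C)⟩
  have hs0 : 0 ≤ s := (hC0 c₀ hc₀).trans (hs (mem_insert _ _))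
  rw [← bandProj_of_isWeakUnit hsc he c]
  refine (isLUB_bandProj hsc he.1 c).2 (forall_mem_range.2 fun n => ?_)
  refine (le_of_forall_bandProj_le hsc (le_inf (hC0 c hc) (nsmul_nonneg he.1 n)) inf_le_right
    (le_inf hs0 (nsmul_nonneg he.1 n)) fun N k => ?_).trans inf_le_left
  exact hT (n, N, k) _ (fun x hx => hφ _ (hs (mem_insert_of_mem _ (mem_iUnion_of_mem _ hx))))
    c hc

end NormedLattice

lemma DirectedOn.exists_monotone_ge {β : Type*} [Preorder β] {A : Set β}
    (hA : DirectedOn (· ≤ ·) A) {g : ℕ → β} (hg : ∀ n, g n ∈ A) :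
    ∃ u : ℕ → β, (∀ n, u n ∈ A) ∧ Monotone u ∧ ∀ n, g n ≤ u n := by
  have hA' : ∀ a b : A, ∃ c : A, a ≤ c ∧ b ≤ c := fun a b => by
    obtain ⟨c, hc, hac, hbc⟩ := hA a a.2 b b.2
    exact ⟨⟨c, hc⟩, hac, hbc⟩
  choose ub hub₁ hub₂ using hA'
  let u : ℕ → A := fun n => Nat.rec ⟨g 0, hg 0⟩ (fun n a => ub a ⟨g (n + 1), hg (n + 1)⟩) n
  have hu : Monotone u := monotone_nat_of_le_succ fun n => hub₁ (u n) ⟨g (n + 1), hg (n + 1)⟩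
  refine ⟨Subtype.val ∘ u, fun n => (u n).2, (Subtype.mono_coe _).comp hu, ?_⟩
  rintro (_ | n)
  · exact le_rfl
  · exact hub₂ (u n) ⟨g (n + 1), hg (n + 1)⟩

def sequentialSups {β : Type*} [Preorder β] (A : Set β) : Set β :=
  {s | ∃ a : ℕ → β, (∀ n, a n ∈ A) ∧ Monotone a ∧ IsLUB (range a) s}

section SequentialSups

variable {β : Type*} [Preorder β] {A : Set β}

lemma subset_sequentialSups : A ⊆ sequentialSups A := fun a ha =>
  ⟨fun _ => a, fun _ => ha, monotone_const, by rw [range_const]; exact isLUB_singleton⟩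

lemma upperBounds_sequentialSups : upperBounds (sequentialSups A) = upperBounds A :=
  subset_antisymm (upperBounds_mono_set subset_sequentialSups)
    fun _ hu _ ⟨_, haA, _, ha⟩ => ha.2 (forall_mem_range.2 fun n => hu (haA n))

lemma lowerBounds_sequentialSups : lowerBounds (sequentialSups A) = lowerBounds A :=
  subset_antisymm (lowerBounds_mono_set subset_sequentialSups)
    fun _ hb _ ⟨_, haA, _, ha⟩ => (hb (haA 0)).trans (ha.1 (mem_range_self 0))

end SequentialSups

section Levi

variable {X : Type*} [NormedAddCommGroup X] [Lattice X]

theorem HasLeviNorm.hasSeqLeviNorm (h : HasLeviNorm X) : HasSeqLeviNorm X :=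
  fun x hx hmono ⟨M, hM⟩ => h (range x) (range_nonempty x) (forall_mem_range.2 hx)
    (directedOn_range.2 hmono.directed_le) ⟨M, forall_mem_range.2 hM⟩

lemma HasSeqLeviNorm.exists_mem_sequentialSups_upperBounds (hseq : HasSeqLeviNorm X) {A : Set X}
    (hA0 : ∀ x ∈ A, 0 ≤ x) (hAdir : DirectedOn (· ≤ ·) A) (hAbdd : ∃ M : ℝ, ∀ x ∈ A, ‖x‖ ≤ M)
    {a₀ : X} (ha₀ : a₀ ∈ A) {T : Set X} (hT : T.Countable) (hTA : T ⊆ sequentialSups A) :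
    ∃ s ∈ sequentialSups A, s ∈ upperBounds T := by
  obtain ⟨f, hf⟩ := (hT.insert a₀).exists_eq_range (insert_nonempty a₀ T)
  choose F hFA hFmono hFlub using fun i =>
    insert_subset (subset_sequentialSups ha₀) hTA (hf ▸ mem_range_self i : f i ∈ insert a₀ T)
  obtain ⟨u, huA, humono, hFu⟩ :=
    hAdir.exists_monotone_ge (g := fun n => F n.unpair.1 n.unpair.2) fun n => hFA _ _
  obtain ⟨M, hM⟩ := hAbdd
  obtain ⟨s, hs⟩ := hseq u (fun n => hA0 _ (huA n)) humono ⟨M, fun n => hM _ (huA n)⟩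
  refine ⟨s, ⟨u, huA, humono, hs⟩, fun t ht => ?_⟩
  obtain ⟨i, rfl⟩ : t ∈ range f := hf ▸ mem_insert_of_mem _ ht
  refine (hFlub i).2 (forall_mem_range.2 fun j => ?_)
  calc F i j ≤ u (Nat.pair i j) := by simpa using hFu (Nat.pair i j)
    _ ≤ s := hs.1 (mem_range_self _)

theorem HasSeqLeviNorm.hasLeviNorm [IsOrderedAddMonoid X] [HasSolidNorm X] [NormedSpace ℝ X]
    [CompleteSpace X] (hsc : DedekindSigmaComplete X) (hcount : HasCountableDisjointFamilies X)
    (hseq : HasSeqLeviNorm X) : HasLeviNorm X := by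
  rintro A ⟨a₀, ha₀⟩ hA0 hAdir hAbdd
  have hbound : ∀ T : Set X, T.Countable → T ⊆ sequentialSups A →
      ∃ s ∈ sequentialSups A, s ∈ upperBounds T := fun T =>
    hseq.exists_mem_sequentialSups_upperBounds hA0 hAdir hAbdd ha₀
  obtain ⟨s, hs⟩ := zorn_le₀ (sequentialSups A) fun C hCS hC => by
    obtain ⟨C₀, hC₀C, hC₀, hub⟩ := hC.exists_countable_upperBounds_eq hsc hcount
      fun c hc => lowerBounds_sequentialSups.ge hA0 (hCS hc)
    obtain ⟨s, hsS, hs⟩ := hbound C₀ hC₀ (hC₀C.trans hCS)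
    exact ⟨s, hsS, hub.subset hs⟩
  refine ⟨s, fun a ha => ?_, fun u hu => (upperBounds_sequentialSups (A := A)).ge hu hs.1⟩
  obtain ⟨s', hs'S, hs'⟩ := hbound {s, a} ((countable_singleton a).insert s)
    (insert_subset hs.1 (singleton_subset_iff.2 (subset_sequentialSups ha)))
  exact (hs' (mem_insert_of_mem _ rfl)).trans (hs.2 hs'S (hs' (mem_insert _ _)))

end Levi

theorem hasLeviNorm_iff_hasSeqLeviNorm_of_countable_disjoint_families
    {X : Type*} [NormedAddCommGroup X] [Lattice X] [IsOrderedAddMonoid X] [HasSolidNorm X] [NormedSpace ℝ X] [CompleteSpace X]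
    (hsc : DedekindSigmaComplete X)
    (hcount : ∀ A : Set X, (∀ x ∈ A, 0 ≤ x) → (∀ x ∈ A, x ≠ 0) →
        A.Pairwise (fun a b => a ⊓ b = 0) → A.Countable) :
    HasLeviNorm X ↔ HasSeqLeviNorm X :=
  ⟨HasLeviNorm.hasSeqLeviNorm, HasSeqLeviNorm.hasLeviNorm hsc hcount⟩
end

section
/- Let E be a separable L-space and let F be a Banach lattice with a sequentially Levi norm. Then every continuous linear operator T : E → F is regular. -/
/-- An operator between ordered spaces is *positive* if it maps positive
elements to positive elements. -/
def IsPositiveOp {E F : Type*} [NormedAddCommGroup E] [NormedSpace ℝ E] [Lattice E]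
    [NormedAddCommGroup F] [NormedSpace ℝ F] [Lattice F] (T : E →L[ℝ] F) : Prop :=
  ∀ x : E, 0 ≤ x → 0 ≤ T x

/-- An operator is *regular* if it is the difference of two positive continuous
linear operators. -/
def IsRegularOp {E F : Type*} [NormedAddCommGroup E] [NormedSpace ℝ E] [Lattice E]
    [NormedAddCommGroup F] [NormedSpace ℝ F] [Lattice F] (T : E →L[ℝ] F) : Prop :=
  ∃ P Q : E →L[ℝ] F, IsPositiveOp P ∧ IsPositiveOp Q ∧ T = P - Q

/-!
For `x ≥ 0` let `V(x)` be the set of sums `∑ |T xᵢ|` over finite decompositions `x = ∑ xᵢ` with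
all `xᵢ ≥ 0`. By the Riesz decomposition property `V(x)` is directed upwards; since the norm of
the L-space `E` is additive on the cone it is bounded by `‖T‖ ‖x‖`; and it is separable because
`E` is. An increasing sequence in `V(x)` dominating a countable dense subset has the same upper
bounds as `V(x)` (the positive cone is closed), so the sequential Levi property yields
`p(x) = sup V(x)`. Riesz decomposition again makes `p` additive on the cone, and it is positively
homogeneous, so `p` extends to a positive linear operator `S`, which is bounded like every positive
operator on a Banach lattice. Since `|T x| ≤ S x` for `x ≥ 0`, `T = S - (S - T)` is regular.
-/

open TopologicalSpace
open scoped Pointwise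

theorem nonneg_of_two_pow_nsmul_nonneg {α : Type*} [Lattice α] [AddCommGroup α]
    [IsOrderedAddMonoid α] {a : α} : ∀ n : ℕ, 0 ≤ 2 ^ n • a → 0 ≤ a
  | 0, h => by simpa using h
  | n + 1, h => nsmul_two_semiclosed <| nonneg_of_two_pow_nsmul_nonneg n <| by
      rwa [← mul_nsmul, ← pow_succ']

section NormedLattice

variable {E : Type*} [NormedAddCommGroup E] [Lattice E] [IsOrderedAddMonoid E] [HasSolidNorm E]
  [NormedSpace ℝ E]

theorem HasSolidNorm.smul_nonneg {c : ℝ} (hc : 0 ≤ c) {x : E} (hx : 0 ≤ x) : 0 ≤ c • x := by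
  have hdyadic (n : ℕ) : 0 ≤ ((⌊c * 2 ^ n⌋₊ : ℝ) / 2 ^ n) • x := by
    refine nonneg_of_two_pow_nsmul_nonneg n ?_
    rw [← Nat.cast_smul_eq_nsmul ℝ, smul_smul, Nat.cast_pow, Nat.cast_ofNat,
      mul_div_cancel₀ _ (by positivity), Nat.cast_smul_eq_nsmul]
    exact nsmul_nonneg hx _
  exact ge_of_tendsto' (((tendsto_nat_floor_mul_div_atTop hc).comp
    (tendsto_pow_atTop_atTop_of_one_lt one_lt_two)).smul_const x) hdyadic

-- Mathlib's normed lattices do not assume that scalar multiplication respects the order.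
instance HasSolidNorm.toPosSMulMono : PosSMulMono ℝ E :=
  .of_smul_nonneg fun _ hc _ hx => HasSolidNorm.smul_nonneg hc hx

end NormedLattice

theorem abs_smul_of_nonneg {𝕜 F : Type*} [Field 𝕜] [LinearOrder 𝕜] [IsStrictOrderedRing 𝕜]
    [Lattice F] [AddCommGroup F] [Module 𝕜 F] [PosSMulMono 𝕜 F] {c : 𝕜} (hc : 0 ≤ c) (z : F) :
    |c • z| = c • |z| := by
  change c • z ⊔ -(c • z) = c • (z ⊔ -z)
  rcases hc.eq_or_lt with rfl | hc
  · simp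
  · rw [← smul_neg]
    exact ((OrderIso.smulRight hc).map_sup z (-z)).symm

theorem List.exists_riesz_decomposition {α : Type*} [Lattice α] [AddCommGroup α]
    [IsOrderedAddMonoid α] :
    ∀ l : List α, (∀ y ∈ l, 0 ≤ y) → ∀ {a b : α}, 0 ≤ a → 0 ≤ b → l.sum = a + b →
      ∃ m : List (α × α), (∀ q ∈ m, 0 ≤ q) ∧ m.map (fun q => q.1 + q.2) = l ∧
        (m.map Prod.fst).sum = a ∧ (m.map Prod.snd).sum = b
  | [], _, a, b, ha, hb, hab => by
    obtain ⟨rfl, rfl⟩ := (add_eq_zero_iff_of_nonneg ha hb).1 hab.symm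
    exact ⟨[], by simp, rfl, rfl, rfl⟩
  | c :: l, hl, a, b, ha, hb, hab => by
    obtain ⟨hc, hl⟩ := List.forall_mem_cons.1 hl
    have hc_le : c ≤ a + b := hab ▸ le_add_of_nonneg_right (List.sum_nonneg hl)
    -- split `c` as `c ⊓ a` plus a remainder `(c - a) ⊔ 0`, which fits under `b`
    have hrest : c - c ⊓ a ≤ b := by
      rw [sub_inf, sub_self]
      exact sup_le hb (sub_le_iff_le_add'.2 hc_le)
    obtain ⟨m, hm, hmap, hfst, hsnd⟩ := exists_riesz_decomposition l hl
      (sub_nonneg.2 inf_le_right) (sub_nonneg.2 hrest) (by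
        rw [List.sum_cons] at hab
        rw [eq_sub_of_add_eq' hab]; abel)
    refine ⟨(c ⊓ a, c - c ⊓ a) :: m, ?_, ?_, ?_, ?_⟩
    · exact List.forall_mem_cons.2 ⟨⟨le_inf hc ha, sub_nonneg.2 inf_le_left⟩, hm⟩
    · simp [hmap]
    · simp [hfst]
    · simp only [List.map_cons, List.sum_cons, hsnd]; abel

section Directed

variable {α : Type*} [Preorder α] {D : Set α}

theorem DirectedOn.exists_monotone_ge_s8 (hD : DirectedOn (· ≤ ·) D) (c : ℕ → α)
    (hc : ∀ n, c n ∈ D) : ∃ e : ℕ → α, Monotone e ∧ (∀ n, e n ∈ D) ∧ ∀ n, c n ≤ e n := by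
  choose u huD hxu hyu using hD
  let e : ℕ → D := fun n => Nat.rec ⟨c 0, hc 0⟩
    (fun n z => ⟨u z.1 z.2 (c (n + 1)) (hc (n + 1)), huD _ _ _ _⟩) n
  refine ⟨fun n => (e n).1, monotone_nat_of_le_succ fun n => hxu _ _ _ _, fun n => (e n).2,
    fun n => ?_⟩
  cases n
  exacts [le_rfl, hyu _ _ _ _]

theorem DirectedOn.exists_isLUB_of_isSeparable [TopologicalSpace α] [PseudoMetrizableSpace α]
    [ClosedIicTopology α] (hD : DirectedOn (· ≤ ·) D) (hne : D.Nonempty) (hsep : IsSeparable D)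
    (hseq : ∀ x : ℕ → α, Monotone x → (∀ n, x n ∈ D) → ∃ s, IsLUB (Set.range x) s) :
    ∃ s, IsLUB D s := by
  obtain ⟨t, htD, htc, hDt⟩ := hsep.exists_countable_dense_subset
  obtain ⟨c, rfl⟩ := htc.exists_eq_range <| by
    by_contra ht
    obtain ⟨d, hd⟩ := hne
    simpa [Set.not_nonempty_iff_eq_empty.1 ht] using hDt hd
  obtain ⟨e, he, heD, hce⟩ := hD.exists_monotone_ge_s8 c fun n => htD ⟨n, rfl⟩
  obtain ⟨s, hs⟩ := hseq e he heD
  refine ⟨s, fun d hd => ?_, fun b hb => hs.2 (Set.forall_mem_range.2 fun n => hb (heD n))⟩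
  exact closure_minimal (Set.range_subset_iff.2 fun n => (hce n).trans (hs.1 ⟨n, rfl⟩))
    isClosed_Iic (hDt hd)

end Directed

theorem exists_linearMap_eq_on_nonneg {𝕜 E F : Type*} [Field 𝕜] [LinearOrder 𝕜]
    [IsStrictOrderedRing 𝕜] [AddCommGroup E] [Lattice E] [IsOrderedAddMonoid E] [Module 𝕜 E]
    [PosSMulMono 𝕜 E] [AddCommGroup F] [Module 𝕜 F] (p : E → F)
    (hadd : ∀ x y, 0 ≤ x → 0 ≤ y → p (x + y) = p x + p y)
    (hsmul : ∀ (c : 𝕜) x, 0 < c → 0 ≤ x → p (c • x) = c • p x) :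
    ∃ S : E →ₗ[𝕜] F, ∀ x, 0 ≤ x → S x = p x := by
  have hp0 : p 0 = 0 := by simpa using hadd 0 0 le_rfl le_rfl
  -- `x ↦ p x⁺ - p x⁻` evaluates `p a - p b` on every difference `a - b` of positive elements
  have hdiff : ∀ a b, 0 ≤ a → 0 ≤ b → p (a - b)⁺ - p (a - b)⁻ = p a - p b := by
    intro a b ha hb
    have hsplit : (a - b)⁺ + b = (a - b)⁻ + a := by
      rw [sub_eq_iff_eq_add.1 (posPart_sub_negPart (a - b))]; abel
    rw [sub_eq_sub_iff_add_eq_add, ← hadd _ _ (posPart_nonneg _) hb, add_comm (p a),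
      ← hadd _ _ (negPart_nonneg _) ha, hsplit]
  let S : E →+ F := AddMonoidHom.mk' (fun x => p x⁺ - p x⁻) fun x y => by
    have hxy : (x⁺ + y⁺) - (x⁻ + y⁻) = x + y := by
      rw [add_sub_add_comm, posPart_sub_negPart, posPart_sub_negPart]
    have h := hdiff _ _ (add_nonneg (posPart_nonneg x) (posPart_nonneg y))
      (add_nonneg (negPart_nonneg x) (negPart_nonneg y))
    rw [hxy, hadd _ _ (posPart_nonneg x) (posPart_nonneg y),
      hadd _ _ (negPart_nonneg x) (negPart_nonneg y)] at h
    rw [h]; abel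
  have hS_smul : ∀ (c : 𝕜) x, 0 < c → S (c • x) = c • S x := by
    intro c x hc
    have hcx : c • x = c • x⁺ - c • x⁻ := by rw [← smul_sub, posPart_sub_negPart]
    change p (c • x)⁺ - p (c • x)⁻ = c • (p x⁺ - p x⁻)
    rw [hcx, hdiff _ _ (smul_nonneg hc.le (posPart_nonneg x))
      (smul_nonneg hc.le (negPart_nonneg x)), hsmul c _ hc (posPart_nonneg x),
      hsmul c _ hc (negPart_nonneg x), smul_sub]
  refine ⟨{ toFun := S, map_add' := S.map_add, map_smul' := fun c x => ?_ }, fun x hx => ?_⟩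
  · rcases lt_trichotomy c 0 with hc | rfl | hc
    · have := hS_smul (-c) x (neg_pos.2 hc)
      rwa [neg_smul, map_neg, neg_smul, neg_inj] at this
    · simp
    · exact hS_smul c x hc
  · change p x⁺ - p x⁻ = p x
    rw [posPart_eq_self.2 hx, negPart_eq_zero.2 hx, hp0, sub_zero]

section AutomaticContinuity

variable {E F : Type*} [NormedAddCommGroup E] [Lattice E] [IsOrderedAddMonoid E] [HasSolidNorm E]
  [NormedSpace ℝ E] [CompleteSpace E] [NormedAddCommGroup F] [Lattice F] [IsOrderedAddMonoid F]
  [HasSolidNorm F] [NormedSpace ℝ F]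

-- If `‖S xₙ‖ > 4ⁿ ‖xₙ‖`, then `y = ∑ xₙ / (2ⁿ ‖xₙ‖)` converges and `‖S y‖ > 2ⁿ` for all `n`.
theorem LinearMap.exists_bound_on_nonneg_of_map_nonneg (S : E →ₗ[ℝ] F)
    (hS : ∀ x, 0 ≤ x → 0 ≤ S x) : ∃ C, ∀ x, 0 ≤ x → ‖S x‖ ≤ C * ‖x‖ := by
  by_contra! h
  choose x hx hSx using fun n : ℕ => h (4 ^ n)
  have hx_pos (n : ℕ) : 0 < ‖x n‖ :=
    norm_pos_iff.2 fun h0 => by simpa [h0] using hSx n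
  set u : ℕ → E := fun n => (2 ^ n * ‖x n‖)⁻¹ • x n with hu
  have hu_nonneg (n : ℕ) : 0 ≤ u n := smul_nonneg (by positivity) (hx n)
  have hu_norm (n : ℕ) : ‖u n‖ = (1 / 2) ^ n := by
    rw [hu, norm_smul, norm_inv, norm_mul, norm_pow, Real.norm_two, norm_norm]
    field_simp [(hx_pos n).ne']
    rw [← mul_pow]; norm_num
  have hSu (n : ℕ) : 2 ^ n < ‖S (u n)‖ := by
    rw [hu, map_smul, norm_smul, norm_inv, norm_mul, norm_pow, Real.norm_two, norm_norm,
      lt_inv_mul_iff₀ (mul_pos (by positivity) (hx_pos n))]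
    calc 2 ^ n * ‖x n‖ * 2 ^ n = 4 ^ n * ‖x n‖ := by rw [mul_right_comm, ← mul_pow]; norm_num
      _ < ‖S (x n)‖ := hSx n
  have hsum : Summable u := .of_norm <| by simpa [hu_norm] using summable_geometric_two
  have hS_mono := (monotone_iff_map_nonneg S).2 hS
  obtain ⟨n, hn⟩ := pow_unbounded_of_one_lt ‖S (∑' n, u n)‖ one_lt_two
  refine (hn.trans (hSu n)).not_ge (norm_le_norm_of_abs_le_abs ?_)
  rw [abs_of_nonneg (hS _ (hu_nonneg n)), abs_of_nonneg (hS _ (tsum_nonneg hu_nonneg))]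
  exact hS_mono (hsum.le_tsum n fun j _ => hu_nonneg j)

theorem LinearMap.exists_bound_of_map_nonneg (S : E →ₗ[ℝ] F) (hS : ∀ x, 0 ≤ x → 0 ≤ S x) :
    ∃ C, ∀ x, ‖S x‖ ≤ C * ‖x‖ := by
  obtain ⟨C, hC⟩ := S.exists_bound_on_nonneg_of_map_nonneg hS
  have hS_mono := (monotone_iff_map_nonneg S).2 hS
  refine ⟨C, fun x => ?_⟩
  have habs : |S x| ≤ |S (|x|)| := by
    rw [abs_of_nonneg (hS _ (abs_nonneg x))]
    exact sup_le (hS_mono (le_abs_self x)) (by rw [← map_neg]; exact hS_mono (neg_le_abs x))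
  calc ‖S x‖ ≤ ‖S (|x|)‖ := norm_le_norm_of_abs_le_abs habs
    _ ≤ C * ‖x‖ := by simpa only [norm_abs_eq_norm] using hC _ (abs_nonneg x)

end AutomaticContinuity

theorem isRegularOp_of_le {E F : Type*} [NormedAddCommGroup E] [NormedSpace ℝ E] [Lattice E]
    [NormedAddCommGroup F] [NormedSpace ℝ F] [Lattice F] [IsOrderedAddMonoid F]
    {S T : E →L[ℝ] F} (hS : IsPositiveOp S) (hTS : ∀ x, 0 ≤ x → T x ≤ S x) : IsRegularOp T :=
  ⟨S, S - T, hS, fun x hx => sub_nonneg.2 (hTS x hx), (sub_sub_cancel S T).symm⟩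

section AbsSum

variable {E F : Type*} [NormedAddCommGroup E] [NormedSpace ℝ E] [NormedAddCommGroup F] [Lattice F]
  [NormedSpace ℝ F] (T : E →L[ℝ] F)

def absSum (l : List E) : F := (l.map fun y => |T y|).sum

@[simp]
theorem absSum_cons (y : E) (l : List E) : absSum T (y :: l) = |T y| + absSum T l := rfl

@[simp]
theorem absSum_append (l l' : List E) : absSum T (l ++ l') = absSum T l + absSum T l' := by
  simp [absSum]

variable [IsOrderedAddMonoid F]

theorem absSum_nonneg (l : List E) : 0 ≤ absSum T l :=
  List.sum_nonneg <| by simp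

theorem abs_map_sum_le_absSum : ∀ l : List E, |T l.sum| ≤ absSum T l
  | [] => by simp [absSum]
  | y :: l => by
    rw [List.sum_cons, map_add, absSum_cons]
    exact (abs_add_le _ _).trans (add_le_add le_rfl (abs_map_sum_le_absSum l))

theorem absSum_map_add_le (m : List (E × E)) :
    absSum T (m.map fun q => q.1 + q.2) ≤
      absSum T (m.map Prod.fst) + absSum T (m.map Prod.snd) := by
  simp only [absSum, List.map_map, ← List.sum_map_add]
  exact List.sum_le_sum fun q _ => by simpa using abs_add_le (T q.1) (T q.2)

end AbsSum

theorem List.norm_sum_of_nonneg {E : Type*} [NormedAddCommGroup E] [Preorder E]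
    [IsOrderedAddMonoid E] (hL : ∀ x y : E, 0 ≤ x → 0 ≤ y → ‖x + y‖ = ‖x‖ + ‖y‖) :
    ∀ l : List E, (∀ y ∈ l, 0 ≤ y) → ‖l.sum‖ = (l.map norm).sum
  | [], _ => by simp
  | y :: l, hl => by
    obtain ⟨hy, hl⟩ := List.forall_mem_cons.1 hl
    rw [List.sum_cons, hL _ _ hy (List.sum_nonneg hl), List.map_cons, List.sum_cons,
      List.norm_sum_of_nonneg hL l hl]

section Variation

variable {E F : Type*} [NormedAddCommGroup E] [Lattice E] [NormedSpace ℝ E]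
  [NormedAddCommGroup F] [Lattice F] [NormedSpace ℝ F] (T : E →L[ℝ] F)

def posDecompositions (x : E) : Set (List E) := {l | (∀ y ∈ l, 0 ≤ y) ∧ l.sum = x}

def variationSet (x : E) : Set F := absSum T '' posDecompositions x

theorem abs_mem_variationSet {x : E} (hx : 0 ≤ x) : |T x| ∈ variationSet T x :=
  ⟨[x], ⟨by simpa using hx, by simp⟩, by simp [absSum]⟩

theorem smul_variationSet_subset [PosSMulMono ℝ E] [PosSMulMono ℝ F] {c : ℝ} (hc : 0 ≤ c)
    (x : E) : c • variationSet T x ⊆ variationSet T (c • x) := by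
  rintro _ ⟨_, ⟨l, ⟨hl, rfl⟩, rfl⟩, rfl⟩
  refine ⟨l.map (c • ·), ⟨List.forall_mem_map.2 fun y hy => smul_nonneg hc (hl y hy),
    List.smul_sum.symm⟩, ?_⟩
  simp [absSum, List.smul_sum, List.map_map, Function.comp_def, abs_smul_of_nonneg hc]

theorem variationSet_smul [PosSMulMono ℝ E] [PosSMulMono ℝ F] {c : ℝ} (hc : 0 < c) (x : E) :
    variationSet T (c • x) = c • variationSet T x := by
  refine subset_antisymm ?_ (smul_variationSet_subset T hc.le x)
  calc variationSet T (c • x) = c • c⁻¹ • variationSet T (c • x) :=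
        (smul_inv_smul₀ hc.ne' _).symm
    _ ⊆ c • variationSet T (c⁻¹ • c • x) :=
        Set.smul_set_mono (smul_variationSet_subset T (inv_nonneg.2 hc.le) _)
    _ = c • variationSet T x := by rw [inv_smul_smul₀ hc.ne']

theorem isLUB_variationSet_smul [PosSMulMono ℝ E] [PosSMulMono ℝ F] {c : ℝ} (hc : 0 < c)
    {x : E} {a : F} (ha : IsLUB (variationSet T x) a) :
    IsLUB (variationSet T (c • x)) (c • a) := by
  rw [variationSet_smul T hc, ← Set.image_smul]
  exact (OrderIso.smulRight hc).isLUB_image'.2 ha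

variable [IsOrderedAddMonoid F]

theorem nonneg_of_mem_variationSet {x : E} {z : F} (hz : z ∈ variationSet T x) : 0 ≤ z := by
  obtain ⟨l, -, rfl⟩ := hz
  exact absSum_nonneg T l

theorem isSeparable_variationSet [SeparableSpace E] [HasSolidNorm F] (x : E) :
    IsSeparable (variationSet T x) := by
  have hcont (n : ℕ) : Continuous fun f : Fin n → E => ∑ i, |T (f i)| :=
    continuous_finsetSum _ fun i _ =>
      have hTi : Continuous fun f : Fin n → E => T (f i) := T.continuous.comp (continuous_apply i)
      hTi.sup hTi.neg
  refine (IsSeparable.iUnion fun n => isSeparable_range (hcont n)).mono ?_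
  rintro _ ⟨l, -, rfl⟩
  refine Set.mem_iUnion.2 ⟨l.length, l.get, ?_⟩
  change ∑ i, |T (l.get i)| = absSum T l
  rw [absSum, ← List.sum_ofFn, ← List.ofFn_getElem_eq_map]
  rfl

theorem norm_le_of_mem_variationSet [IsOrderedAddMonoid E] [HasSolidNorm F]
    (hL : ∀ x y : E, 0 ≤ x → 0 ≤ y → ‖x + y‖ = ‖x‖ + ‖y‖) {x : E} {z : F}
    (hz : z ∈ variationSet T x) : ‖z‖ ≤ ‖T‖ * ‖x‖ := by
  obtain ⟨l, ⟨hl, rfl⟩, rfl⟩ := hz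
  calc ‖absSum T l‖ ≤ ((l.map fun y => |T y|).map norm).sum :=
        List.le_sum_of_subadditive norm norm_zero.le norm_add_le _
    _ ≤ (l.map fun y => ‖T‖ * ‖y‖).sum := by
        simp only [List.map_map, Function.comp_def]
        exact List.sum_le_sum fun y _ => (norm_abs_eq_norm _).trans_le (T.le_opNorm y)
    _ = ‖T‖ * ‖l.sum‖ := by rw [List.norm_sum_of_nonneg hL l hl, List.sum_map_mul_left]

variable [IsOrderedAddMonoid E]

theorem exists_refinement_absSum_ge :
    ∀ l m : List E, (∀ y ∈ l, 0 ≤ y) → (∀ y ∈ m, 0 ≤ y) → l.sum = m.sum →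
      ∃ r : List E, (∀ y ∈ r, 0 ≤ y) ∧ r.sum = l.sum ∧
        absSum T l ≤ absSum T r ∧ absSum T m ≤ absSum T r
  | [], m, _, hm, h => ⟨m, hm, h.symm, by simpa [absSum] using absSum_nonneg T m, le_rfl⟩
  | a :: l, m, hl, hm, h => by
    obtain ⟨ha, hl⟩ := List.forall_mem_cons.1 hl
    obtain ⟨q, hq, rfl, hfst, hsnd⟩ :=
      m.exists_riesz_decomposition hm ha (List.sum_nonneg hl) (by rw [← h, List.sum_cons])
    obtain ⟨r, hr, hrsum, hlr, hqr⟩ := exists_refinement_absSum_ge l (q.map Prod.snd) hl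
      (List.forall_mem_map.2 fun p hp => (hq p hp).2) hsnd.symm
    refine ⟨q.map Prod.fst ++ r, ?_, ?_, ?_, ?_⟩
    · exact List.forall_mem_append.2 ⟨List.forall_mem_map.2 fun p hp => (hq p hp).1, hr⟩
    · rw [List.sum_append, hfst, hrsum, List.sum_cons]
    · rw [absSum_cons, absSum_append]
      exact add_le_add (hfst ▸ abs_map_sum_le_absSum T _) hlr
    · rw [absSum_append]
      exact (absSum_map_add_le T q).trans (add_le_add le_rfl hqr)

theorem directedOn_variationSet (x : E) : DirectedOn (· ≤ ·) (variationSet T x) := by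
  rintro _ ⟨l, ⟨hl, rfl⟩, rfl⟩ _ ⟨m, ⟨hm, hlm⟩, rfl⟩
  obtain ⟨r, hr, hrl, hlr, hmr⟩ := exists_refinement_absSum_ge T l m hl hm hlm.symm
  exact ⟨_, ⟨r, ⟨hr, hrl⟩, rfl⟩, hlr, hmr⟩

theorem isLUB_variationSet_add {x y : E} (hx : 0 ≤ x) (hy : 0 ≤ y) {a b : F}
    (ha : IsLUB (variationSet T x) a) (hb : IsLUB (variationSet T y) b) :
    IsLUB (variationSet T (x + y)) (a + b) := by
  have hsub : variationSet T x + variationSet T y ⊆ variationSet T (x + y) := by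
    rintro _ ⟨_, ⟨l, ⟨hl, rfl⟩, rfl⟩, _, ⟨m, ⟨hm, rfl⟩, rfl⟩, rfl⟩
    exact ⟨l ++ m, ⟨List.forall_mem_append.2 ⟨hl, hm⟩, List.sum_append⟩, absSum_append T l m⟩
  have hcofinal :
      IsCofinalFor (variationSet T (x + y)) (variationSet T x + variationSet T y) := by
    rintro _ ⟨l, ⟨hl, hsum⟩, rfl⟩
    obtain ⟨q, hq, rfl, hfst, hsnd⟩ := l.exists_riesz_decomposition hl hx hy hsum
    exact ⟨_, Set.add_mem_add
      ⟨_, ⟨List.forall_mem_map.2 fun p hp => (hq p hp).1, hfst⟩, rfl⟩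
      ⟨_, ⟨List.forall_mem_map.2 fun p hp => (hq p hp).2, hsnd⟩, rfl⟩, absSum_map_add_le T q⟩
  have hlub := ha.add hb
  exact ⟨upperBounds_mono_of_isCofinalFor hcofinal hlub.1,
    fun c hc => hlub.2 (upperBounds_mono_set hsub hc)⟩

end Variation

theorem exists_isLUB_variationSet {E F : Type*} [NormedAddCommGroup E] [Lattice E]
    [IsOrderedAddMonoid E] [NormedSpace ℝ E] [SeparableSpace E] [NormedAddCommGroup F] [Lattice F]
    [IsOrderedAddMonoid F] [HasSolidNorm F] [NormedSpace ℝ F] (T : E →L[ℝ] F)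
    (hL : ∀ x y : E, 0 ≤ x → 0 ≤ y → ‖x + y‖ = ‖x‖ + ‖y‖) (hLevi : HasSeqLeviNorm F) {x : E}
    (hx : 0 ≤ x) : ∃ s, IsLUB (variationSet T x) s :=
  (directedOn_variationSet T x).exists_isLUB_of_isSeparable ⟨_, abs_mem_variationSet T hx⟩
    (isSeparable_variationSet T x) fun z hz hzV => hLevi z
      (fun n => nonneg_of_mem_variationSet T (hzV n)) hz
      ⟨‖T‖ * ‖x‖, fun n => norm_le_of_mem_variationSet T hL (hzV n)⟩

theorem continuous_operator_regular_of_separable_Lspace_seqLevi_general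
    {E F : Type*}
    [NormedAddCommGroup E] [Lattice E] [IsOrderedAddMonoid E] [HasSolidNorm E] [NormedSpace ℝ E] [CompleteSpace E]
    [TopologicalSpace.SeparableSpace E]
    [NormedAddCommGroup F] [Lattice F] [IsOrderedAddMonoid F] [HasSolidNorm F] [NormedSpace ℝ F]
    (hLspace : ∀ x y : E, 0 ≤ x → 0 ≤ y → ‖x + y‖ = ‖x‖ + ‖y‖)
    (hLevi : HasSeqLeviNorm F)
    (T : E →L[ℝ] F) :
    IsRegularOp T := by
  have hlub (x : E) : ∃ s : F, 0 ≤ x → IsLUB (variationSet T x) s := by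
    by_cases hx : 0 ≤ x
    · exact (exists_isLUB_variationSet T hLspace hLevi hx).imp fun _ h _ => h
    · exact ⟨0, fun h => absurd h hx⟩
  choose p hp using hlub
  have hTp (x : E) (hx : 0 ≤ x) : |T x| ≤ p x := (hp x hx).1 (abs_mem_variationSet T hx)
  obtain ⟨S, hS⟩ := exists_linearMap_eq_on_nonneg (𝕜 := ℝ) p
    (fun x y hx hy => (hp _ (add_nonneg hx hy)).unique
      (isLUB_variationSet_add T hx hy (hp x hx) (hp y hy)))
    (fun c x hc hx => (hp _ (smul_nonneg hc.le hx)).unique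
      (isLUB_variationSet_smul T hc (hp x hx)))
  have hS_nonneg (x : E) (hx : 0 ≤ x) : 0 ≤ S x := hS x hx ▸ (abs_nonneg _).trans (hTp x hx)
  exact isRegularOp_of_le
    (S := S.mkContinuousOfExistsBound (S.exists_bound_of_map_nonneg hS_nonneg))
    hS_nonneg fun x hx => (le_abs_self _).trans ((hTp x hx).trans_eq (hS x hx).symm)

theorem continuous_operator_regular_of_separable_Lspace_seqLevi
    {E F : Type*}
    [NormedAddCommGroup E] [Lattice E] [IsOrderedAddMonoid E] [HasSolidNorm E] [NormedSpace ℝ E] [CompleteSpace E]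
    [TopologicalSpace.SeparableSpace E]
    [NormedAddCommGroup F] [Lattice F] [IsOrderedAddMonoid F] [HasSolidNorm F] [NormedSpace ℝ F] [CompleteSpace F]
    (hLspace : ∀ x y : E, 0 ≤ x → 0 ≤ y → ‖x + y‖ = ‖x‖ + ‖y‖)
    (hLevi : HasSeqLeviNorm F)
    (T : E →L[ℝ] F) :
    IsRegularOp T :=
  continuous_operator_regular_of_separable_Lspace_seqLevi_general hLspace hLevi T
end

section
/- For any index set Γ and any Banach lattice F, every continuous linear operator from ℓ¹(Γ) to F is regular. -/
open MeasureTheory Filter Topology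

section SMulNonneg

variable {F : Type*} [AddCommGroup F] [Lattice F] [IsOrderedAddMonoid F] [Module ℝ F]

lemma inv_two_pow_smul_nonneg {v : F} (hv : 0 ≤ v) (m : ℕ) : 0 ≤ ((2 : ℝ) ^ m)⁻¹ • v := by
  induction m with
  | zero => simpa using hv
  | succ m ih =>
    refine nsmul_two_semiclosed ?_
    rwa [← Nat.cast_smul_eq_nsmul ℝ, smul_smul, pow_succ, mul_inv, Nat.cast_two,
      mul_left_comm, mul_inv_cancel₀ two_ne_zero, mul_one]

/-- Usually an axiom of Banach lattices; here it follows for dyadic `c` from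
`nsmul_two_semiclosed` and for all other `c` because the order is closed. -/
lemma smul_nonneg_of_orderClosedTopology [TopologicalSpace F] [OrderClosedTopology F]
    [ContinuousSMul ℝ F] {c : ℝ} (hc : 0 ≤ c) {v : F} (hv : 0 ≤ v) : 0 ≤ c • v := by
  have hdyadic : Tendsto (fun n : ℕ => (⌊c * 2 ^ n⌋₊ : ℝ) / 2 ^ n) atTop (𝓝 c) :=
    (tendsto_nat_floor_mul_div_atTop hc).comp (tendsto_pow_atTop_atTop_of_one_lt one_lt_two)
  refine ge_of_tendsto (hdyadic.smul_const v) (Eventually.of_forall fun n => ?_)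
  rw [div_eq_mul_inv, mul_smul, Nat.cast_smul_eq_nsmul]
  exact nsmul_nonneg (inv_two_pow_smul_nonneg hv n) _

end SMulNonneg

section NormPosPart

variable {F : Type*} [NormedAddCommGroup F] [Lattice F] [HasSolidNorm F] [IsOrderedAddMonoid F]

lemma norm_posPart_le (a : F) : ‖a⁺‖ ≤ ‖a‖ := by
  simpa [posPart_def] using norm_sup_sub_sup_le_norm a 0 0

lemma norm_negPart_le (a : F) : ‖a⁻‖ ≤ ‖a‖ := by
  simpa using norm_posPart_le (-a)

end NormPosPart

lemma norm_smul_le_mul_of_norm_le {E : Type*} [SeminormedAddCommGroup E] [NormedSpace ℝ E]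
    (a : ℝ) {w : E} {C : ℝ} (hw : ‖w‖ ≤ C) : ‖a • w‖ ≤ ‖a‖ * C :=
  (norm_smul a w).trans_le (mul_le_mul_of_nonneg_left hw (norm_nonneg a))

local notation "ℓ¹[" Γ "]" => Lp ℝ 1 (Measure.count : Measure Γ)

namespace L1Count

variable {Γ : Type*} [MeasurableSpace Γ]

/-- Under counting measure a.e. equality is equality, so the representative of an element of
`ℓ¹(Γ)` depends linearly on it. -/
noncomputable def coordₗ : ℓ¹[Γ] →ₗ[ℝ] Γ → ℝ where
  toFun x := x
  map_add' x y := funext (Measure.ae_count_iff.1 (Lp.coeFn_add x y))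
  map_smul' c x := funext (Measure.ae_count_iff.1 (Lp.coeFn_smul c x))

@[simp]
lemma coordₗ_apply (x : ℓ¹[Γ]) : coordₗ x = ⇑x := rfl

lemma coord_nonneg {x : ℓ¹[Γ]} (hx : 0 ≤ x) (γ : Γ) : 0 ≤ x γ :=
  Measure.ae_count_iff.1 ((Lp.coeFn_nonneg x).2 hx) γ

variable [MeasurableSingletonClass Γ]

lemma summable_norm (x : ℓ¹[Γ]) : Summable fun γ => ‖x γ‖ :=
  integrable_count_iff.1 (L1.integrable_coeFn x)

lemma norm_eq_tsum (x : ℓ¹[Γ]) : ‖x‖ = ∑' γ, ‖x γ‖ := by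
  rw [Lp.norm_def, eLpNorm_one_eq_lintegral_enorm, lintegral_count,
    ENNReal.tsum_toReal_eq fun _ => enorm_ne_top]
  simp

noncomputable def single (γ : Γ) : ℓ¹[Γ] :=
  indicatorConstLp 1 (measurableSet_singleton γ) (by simp) 1

lemma coeFn_single [DecidableEq Γ] (γ : Γ) : ⇑(single γ) = Pi.single γ 1 :=
  (funext (Measure.ae_count_iff.1 indicatorConstLp_coeFn)).trans (Set.indicator_singleton γ _)

lemma norm_single (γ : Γ) : ‖single γ‖ = 1 := by
  rw [single, norm_indicatorConstLp one_ne_zero ENNReal.one_ne_top]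
  simp

lemma hasSum_single (x : ℓ¹[Γ]) : HasSum (fun γ => x γ • single γ) x := by
  classical
  rw [HasSum, tendsto_iff_norm_sub_tendsto_zero]
  refine (tendsto_tsum_compl_atTop_zero fun γ => ‖x γ‖).congr fun s => ?_
  have hcoord : ⇑(∑ γ ∈ s, x γ • single γ - x) = -((s : Set Γ)ᶜ.indicator x) := by
    rw [← coordₗ_apply, map_sub, map_sum]
    simp_rw [map_smul, coordₗ_apply, coeFn_single, ← Pi.single_smul, smul_eq_mul, mul_one]
    ext δ
    by_cases hδ : δ ∈ s <;> simp [Finset.sum_apply, Finset.sum_pi_single, hδ]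
  rw [norm_eq_tsum, hcoord]
  simp only [Pi.neg_apply, norm_neg, norm_indicator_eq_indicator_norm]
  exact tsum_subtype (s : Set Γ)ᶜ fun γ => ‖x γ‖

variable {F : Type*} [NormedAddCommGroup F] [NormedSpace ℝ F]

lemma apply_eq_tsum (T : ℓ¹[Γ] →L[ℝ] F) (x : ℓ¹[Γ]) : T x = ∑' γ, x γ • T (single γ) := by
  simpa using ((hasSum_single x).mapL T).tsum_eq.symm

variable [CompleteSpace F] {v : Γ → F} {C : ℝ}

lemma summable_coord_smul (hv : ∀ γ, ‖v γ‖ ≤ C) (x : ℓ¹[Γ]) :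
    Summable fun γ => x γ • v γ :=
  .of_norm_bounded ((summable_norm x).mul_right C) fun γ =>
    norm_smul_le_mul_of_norm_le (x γ) (hv γ)

variable (v) in
noncomputable def linearCombination (hv : ∀ γ, ‖v γ‖ ≤ C) : ℓ¹[Γ] →L[ℝ] F :=
  LinearMap.mkContinuous
    { toFun x := ∑' γ, x γ • v γ
      map_add' x y := by
        simp only [← coordₗ_apply, map_add, Pi.add_apply, add_smul]
        exact (summable_coord_smul hv x).tsum_add (summable_coord_smul hv y)
      map_smul' c x := by
        simp only [← coordₗ_apply, map_smul, Pi.smul_apply, smul_eq_mul, mul_smul,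
          RingHom.id_apply]
        exact (summable_coord_smul hv x).tsum_const_smul c }
    C fun x => calc
      ‖∑' γ, x γ • v γ‖ ≤ ∑' γ, ‖x γ‖ * C :=
        tsum_of_norm_bounded ((summable_norm x).mul_right C).hasSum fun γ =>
          norm_smul_le_mul_of_norm_le (x γ) (hv γ)
      _ = C * ‖x‖ := by rw [tsum_mul_right, norm_eq_tsum, mul_comm]

lemma linearCombination_apply (hv : ∀ γ, ‖v γ‖ ≤ C) (x : ℓ¹[Γ]) :
    linearCombination v hv x = ∑' γ, x γ • v γ := rfl

lemma isPositiveOp_linearCombination [Lattice F] [HasSolidNorm F] [IsOrderedAddMonoid F]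
    (hv : ∀ γ, ‖v γ‖ ≤ C) (hv₀ : ∀ γ, 0 ≤ v γ) : IsPositiveOp (linearCombination v hv) :=
  fun _ hx => tsum_nonneg fun γ => smul_nonneg_of_orderClosedTopology (coord_nonneg hx γ) (hv₀ γ)

end L1Count

open L1Count

open MeasureTheory in
/-- Every continuous linear operator from `ℓ¹(Γ)` (realized as `L¹` of counting
measure on `Γ`, with every subset of `Γ` measurable) into a Banach lattice `F`
is regular. -/
theorem regular_of_continuous_from_l1
    {Γ : Type*} [MeasurableSpace Γ] (hmeas : ∀ s : Set Γ, MeasurableSet s)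
    {F : Type*} [NormedAddCommGroup F] [Lattice F] [HasSolidNorm F] [IsOrderedAddMonoid F] [NormedSpace ℝ F] [CompleteSpace F]
    (T : Lp ℝ 1 (Measure.count : Measure Γ) →L[ℝ] F) :
    IsRegularOp T := by
  have : MeasurableSingletonClass Γ := ⟨fun γ => hmeas {γ}⟩
  have hT : ∀ γ, ‖T (single γ)‖ ≤ ‖T‖ := fun γ => by
    simpa [norm_single] using T.le_opNorm (single γ)
  have hpos : ∀ γ, ‖(T (single γ))⁺‖ ≤ ‖T‖ := fun γ => (norm_posPart_le _).trans (hT γ)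
  have hneg : ∀ γ, ‖(T (single γ))⁻‖ ≤ ‖T‖ := fun γ => (norm_negPart_le _).trans (hT γ)
  refine ⟨linearCombination _ hpos, linearCombination _ hneg,
    isPositiveOp_linearCombination hpos fun _ => posPart_nonneg _,
    isPositiveOp_linearCombination hneg fun _ => negPart_nonneg _, ?_⟩
  ext x
  rw [sub_apply, linearCombination_apply, linearCombination_apply,
    ← (summable_coord_smul hpos x).tsum_sub (summable_coord_smul hneg x), apply_eq_tsum T x]
  simp_rw [← smul_sub, posPart_sub_negPart]
end
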